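/- The map L₆(F) = F − 2F₇(F) is an involutive linear isometry of 𝒬𝒮𝔽 = {F ∈ (v𝔽)′ : F = F₄(F) = F₅(F)}, commuting with the action on 𝔽 of every linear isometry A of V with A∘φ = φ∘A and Aξ = ξ, and it yields the orthogonal decomposition 𝒬𝒮𝔽 = 𝔽₂ ⊕ 𝔽₄, where 𝔽₂ = {F ∈ 𝔽 : F = F₇(F)} is the (−1)-eigenspace and 𝔽₄ = {F ∈ 𝔽 : F = F₄(F) = F₅(F) and f(F)(ξ) = 0} is the (+1)-eigenspace; the components of F ∈ 𝒬𝒮𝔽 in 𝔽₂ and 𝔽₄ are F₇(F) and (1/4){F₂(F)+F₄(F)+F₅(F)+F₆(F)−4F₇(F)}. -/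

import Mathlib

open scoped BigOperators RealInnerProductSpace

noncomputable section

variable {V : Type*} [NormedAddCommGroup V] [InnerProductSpace ℝ V]

/-- A map `V → V → V → ℝ` linear in each of its three arguments. -/
def Trilinear (F : V → V → V → ℝ) : Prop :=
  (∀ y z, IsLinearMap ℝ fun x => F x y z) ∧
  (∀ x z, IsLinearMap ℝ fun y => F x y z) ∧
  (∀ x y, IsLinearMap ℝ fun z => F x y z)

/-- Almost contact metric structure `(φ, ξ, η, g)` on `V` with `dim V = 2n+1`. -/
def ACM (n : ℕ) (φ : V →ₗ[ℝ] V) (ξ : V) (η : V →ₗ[ℝ] ℝ) : Prop :=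
  Module.finrank ℝ V = 2 * n + 1 ∧
  (∀ x, φ (φ x) = -x + η x • ξ) ∧
  φ ξ = 0 ∧
  (∀ x, η (φ x) = 0) ∧
  ⟪ξ, ξ⟫ = 1 ∧
  (∀ x y, ⟪φ x, φ y⟫ = ⟪x, y⟫ - η x * η y)

/-- Membership in the space `𝔽` of trilinear forms with the symmetries (1). -/
def InF (φ : V →ₗ[ℝ] V) (ξ : V) (η : V →ₗ[ℝ] ℝ) (F : V → V → V → ℝ) : Prop :=
  Trilinear F ∧
  (∀ x y z, F x y z = -F x z y) ∧
  (∀ x y z, F x y z = -F x (φ y) (φ z) + η y * F x ξ z + η z * F x y ξ)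

/-- `h x = -φ²x`. -/
def hMap (φ : V →ₗ[ℝ] V) (x : V) : V := -φ (φ x)

/-- `hF(x,y,z) = F(hx,hy,hz)`. -/
def hF (φ : V →ₗ[ℝ] V) (F : V → V → V → ℝ) : V → V → V → ℝ :=
  fun x y z => F (hMap φ x) (hMap φ y) (hMap φ z)

def F1 (ξ : V) (η : V →ₗ[ℝ] ℝ) (F : V → V → V → ℝ) : V → V → V → ℝ :=
  fun x y z => η x * F ξ y z

def F2 (ξ : V) (η : V →ₗ[ℝ] ℝ) (F : V → V → V → ℝ) : V → V → V → ℝ :=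
  fun x y z => η y * F x ξ z - η z * F x ξ y

def F3 (ξ : V) (η : V →ₗ[ℝ] ℝ) (F : V → V → V → ℝ) : V → V → V → ℝ :=
  fun x y z => η x * η y * F ξ ξ z - η x * η z * F ξ ξ y

def F4 (φ : V →ₗ[ℝ] V) (ξ : V) (η : V →ₗ[ℝ] ℝ) (F : V → V → V → ℝ) : V → V → V → ℝ :=
  fun x y z => η y * F (φ x) ξ (φ z) - η z * F (φ x) ξ (φ y)

def F5 (ξ : V) (η : V →ₗ[ℝ] ℝ) (F : V → V → V → ℝ) : V → V → V → ℝ :=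
  fun x y z => η y * F z ξ x - η z * F y ξ x

def F6 (φ : V →ₗ[ℝ] V) (ξ : V) (η : V →ₗ[ℝ] ℝ) (F : V → V → V → ℝ) : V → V → V → ℝ :=
  fun x y z => η y * F (φ z) ξ (φ x) - η z * F (φ y) ξ (φ x)

/-- `f(F)(z) = Σᵢ F(eᵢ, eᵢ, z)`. -/
def fTr {ι : Type*} [Fintype ι] (e : OrthonormalBasis ι ℝ V) (F : V → V → V → ℝ) (z : V) : ℝ :=
  ∑ i, F (e i) (e i) z

/-- `f*(F)(z) = Σᵢ F(eᵢ, φ eᵢ, z)`. -/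
def fTrStar {ι : Type*} [Fintype ι] (φ : V →ₗ[ℝ] V) (e : OrthonormalBasis ι ℝ V)
    (F : V → V → V → ℝ) (z : V) : ℝ :=
  ∑ i, F (e i) (φ (e i)) z

/-- The inner product on `𝔽`: `⟨F,G⟩ = Σ_{i,j,k} F(eᵢ,eⱼ,e_k) G(eᵢ,eⱼ,e_k)`. -/
def innerF {ι : Type*} [Fintype ι] (e : OrthonormalBasis ι ℝ V) (F G : V → V → V → ℝ) : ℝ :=
  ∑ i, ∑ j, ∑ k, F (e i) (e j) (e k) * G (e i) (e j) (e k)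

def F7 (n : ℕ) {ι : Type*} [Fintype ι] (e : OrthonormalBasis ι ℝ V) (ξ : V) (η : V →ₗ[ℝ] ℝ)
    (F : V → V → V → ℝ) : V → V → V → ℝ :=
  fun x y z => (1 / (2 * (n : ℝ))) * fTr e F ξ * (η z * ⟪x, y⟫ - η y * ⟪x, z⟫)

def F8 (n : ℕ) (φ : V →ₗ[ℝ] V) {ι : Type*} [Fintype ι] (e : OrthonormalBasis ι ℝ V) (ξ : V)
    (η : V →ₗ[ℝ] ℝ) (F : V → V → V → ℝ) : V → V → V → ℝ :=
  fun x y z => -(1 / (2 * (n : ℝ))) * fTrStar φ e F ξ * (η z * ⟪x, φ y⟫ - η y * ⟪x, φ z⟫)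

def F9 (n : ℕ) (φ : V →ₗ[ℝ] V) {ι : Type*} [Fintype ι] (e : OrthonormalBasis ι ℝ V)
    (F : V → V → V → ℝ) : V → V → V → ℝ :=
  fun x y z => (1 / (2 * ((n : ℝ) - 1))) *
    (⟪hMap φ x, hMap φ y⟫ * fTr e F z - ⟪hMap φ x, hMap φ z⟫ * fTr e F y
      - ⟪x, φ y⟫ * fTr e F (φ z) + ⟪x, φ z⟫ * fTr e F (φ y))

def F10 (φ : V →ₗ[ℝ] V) (F : V → V → V → ℝ) : V → V → V → ℝ :=
  fun x y z => (1 / 2) * (F x y z + F (φ x) (φ y) z)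

def F11 (φ : V →ₗ[ℝ] V) (F : V → V → V → ℝ) : V → V → V → ℝ :=
  fun x y z => (1 / 6) * (F x y z + F y z x + F z x y
    - F (φ x) (φ y) z - F (φ y) (φ z) x - F (φ z) (φ x) y)

def F12 (φ : V →ₗ[ℝ] V) (F : V → V → V → ℝ) : V → V → V → ℝ :=
  fun x y z => (1 / 2) * (F x y z - F (φ x) (φ y) z)

/-- The action of a linear isometry `A` of `V` on trilinear forms:
`(A·F)(x,y,z) = F(A⁻¹x, A⁻¹y, A⁻¹z)`. -/
def actA (A : V ≃ₗᵢ[ℝ] V) (F : V → V → V → ℝ) : V → V → V → ℝ :=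
  fun x y z => F (A.symm x) (A.symm y) (A.symm z)

def L1 (ξ : V) (η : V →ₗ[ℝ] ℝ) (F : V → V → V → ℝ) : V → V → V → ℝ :=
  fun x y z => F x y z - 2 * F3 ξ η F x y z

def L2 (ξ : V) (η : V →ₗ[ℝ] ℝ) (F : V → V → V → ℝ) : V → V → V → ℝ :=
  fun x y z => F x y z - 2 * (F1 ξ η F x y z + F2 ξ η F x y z)

def L3 (ξ : V) (η : V →ₗ[ℝ] ℝ) (F : V → V → V → ℝ) : V → V → V → ℝ :=
  fun x y z => F2 ξ η F x y z - F1 ξ η F x y z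

def L4 (φ : V →ₗ[ℝ] V) (ξ : V) (η : V →ₗ[ℝ] ℝ) (F : V → V → V → ℝ) : V → V → V → ℝ :=
  fun x y z => -F4 φ ξ η F x y z

def L5 (ξ : V) (η : V →ₗ[ℝ] ℝ) (F : V → V → V → ℝ) : V → V → V → ℝ :=
  fun x y z => -F5 ξ η F x y z

def L6 (n : ℕ) {ι : Type*} [Fintype ι] (e : OrthonormalBasis ι ℝ V) (ξ : V) (η : V →ₗ[ℝ] ℝ)
    (F : V → V → V → ℝ) : V → V → V → ℝ :=
  fun x y z => F x y z - 2 * F7 n e ξ η F x y z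

def L7 (n : ℕ) (φ : V →ₗ[ℝ] V) {ι : Type*} [Fintype ι] (e : OrthonormalBasis ι ℝ V) (ξ : V)
    (η : V →ₗ[ℝ] ℝ) (F : V → V → V → ℝ) : V → V → V → ℝ :=
  fun x y z => F x y z - 2 * F8 n φ e ξ η F x y z

/-- The subspace `𝔽₁ = {F ∈ 𝔽 : F = F₃(F)}`. -/
def MemF1sub (φ : V →ₗ[ℝ] V) (ξ : V) (η : V →ₗ[ℝ] ℝ) (F : V → V → V → ℝ) : Prop :=
  InF φ ξ η F ∧ F = F3 ξ η F

/-- The subspace `v𝔽 = {F ∈ 𝔽 : hF = 0, ω(F) = 0}`. -/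
def MemVF (φ : V →ₗ[ℝ] V) (ξ : V) (η : V →ₗ[ℝ] ℝ) (F : V → V → V → ℝ) : Prop :=
  InF φ ξ η F ∧ hF φ F = 0 ∧ ∀ z, F ξ ξ z = 0

/-- The subspace `h𝔽 = {F ∈ 𝔽 : F₁(F) = F₂(F) = 0}`. -/
def MemHF (φ : V →ₗ[ℝ] V) (ξ : V) (η : V →ₗ[ℝ] ℝ) (F : V → V → V → ℝ) : Prop :=
  InF φ ξ η F ∧ F1 ξ η F = 0 ∧ F2 ξ η F = 0

/-- The subspace `(v𝔽)′ = {F ∈ 𝔽 : hF = 0, F(ξ,·,·) = 0}`. -/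
def MemVF' (φ : V →ₗ[ℝ] V) (ξ : V) (η : V →ₗ[ℝ] ℝ) (F : V → V → V → ℝ) : Prop :=
  InF φ ξ η F ∧ hF φ F = 0 ∧ ∀ y z, F ξ y z = 0

/-- The subspace `𝔽₈ = {F ∈ 𝔽 : hF = 0, F(·,·,ξ) = 0}`. -/
def MemF8sub (φ : V →ₗ[ℝ] V) (ξ : V) (η : V →ₗ[ℝ] ℝ) (F : V → V → V → ℝ) : Prop :=
  InF φ ξ η F ∧ hF φ F = 0 ∧ ∀ x y, F x y ξ = 0

/-- The subspace `𝒩 = {F ∈ (v𝔽)′ : F = F₄(F)}`. -/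
def MemN (φ : V →ₗ[ℝ] V) (ξ : V) (η : V →ₗ[ℝ] ℝ) (F : V → V → V → ℝ) : Prop :=
  MemVF' φ ξ η F ∧ F = F4 φ ξ η F

/-- The subspace `𝒩̃ = {F ∈ (v𝔽)′ : F = -F₄(F)}`. -/
def MemNt (φ : V →ₗ[ℝ] V) (ξ : V) (η : V →ₗ[ℝ] ℝ) (F : V → V → V → ℝ) : Prop :=
  MemVF' φ ξ η F ∧ F = -F4 φ ξ η F

/-- The subspace `𝒬𝒮𝔽 = {F ∈ (v𝔽)′ : F = F₄(F) = F₅(F)}`. -/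
def MemQS (φ : V →ₗ[ℝ] V) (ξ : V) (η : V →ₗ[ℝ] ℝ) (F : V → V → V → ℝ) : Prop :=
  MemVF' φ ξ η F ∧ F = F4 φ ξ η F ∧ F = F5 ξ η F

/-- The subspace `𝒬𝒦𝔽 = {F ∈ (v𝔽)′ : F = F₄(F) = -F₅(F)}`. -/
def MemQK (φ : V →ₗ[ℝ] V) (ξ : V) (η : V →ₗ[ℝ] ℝ) (F : V → V → V → ℝ) : Prop :=
  MemVF' φ ξ η F ∧ F = F4 φ ξ η F ∧ F = -F5 ξ η F

/-- The subspace `𝔽₆ = {F ∈ (v𝔽)′ : F = -F₄(F) = F₅(F)}`. -/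
def MemF6sub (φ : V →ₗ[ℝ] V) (ξ : V) (η : V →ₗ[ℝ] ℝ) (F : V → V → V → ℝ) : Prop :=
  MemVF' φ ξ η F ∧ F = -F4 φ ξ η F ∧ F = F5 ξ η F

/-- The subspace `𝔽₇ = {F ∈ (v𝔽)′ : F = -F₄(F) = -F₅(F)}`. -/
def MemF7sub (φ : V →ₗ[ℝ] V) (ξ : V) (η : V →ₗ[ℝ] ℝ) (F : V → V → V → ℝ) : Prop :=
  MemVF' φ ξ η F ∧ F = -F4 φ ξ η F ∧ F = -F5 ξ η F

/-- The subspace `𝔽₂ = {F ∈ 𝔽 : F = F₇(F)}`. -/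
def MemF2sub (n : ℕ) {ι : Type*} [Fintype ι] (e : OrthonormalBasis ι ℝ V) (φ : V →ₗ[ℝ] V)
    (ξ : V) (η : V →ₗ[ℝ] ℝ) (F : V → V → V → ℝ) : Prop :=
  InF φ ξ η F ∧ F = F7 n e ξ η F

/-- The subspace `𝔽₃ = {F ∈ 𝔽 : F = F₈(F)}`. -/
def MemF3sub (n : ℕ) {ι : Type*} [Fintype ι] (e : OrthonormalBasis ι ℝ V) (φ : V →ₗ[ℝ] V)
    (ξ : V) (η : V →ₗ[ℝ] ℝ) (F : V → V → V → ℝ) : Prop :=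
  InF φ ξ η F ∧ F = F8 n φ e ξ η F

/-- The subspace `𝔽₄ = {F ∈ 𝔽 : F = F₄(F) = F₅(F), f(F)(ξ) = 0}`. -/
def MemF4sub (n : ℕ) {ι : Type*} [Fintype ι] (e : OrthonormalBasis ι ℝ V) (φ : V →ₗ[ℝ] V)
    (ξ : V) (η : V →ₗ[ℝ] ℝ) (F : V → V → V → ℝ) : Prop :=
  InF φ ξ η F ∧ F = F4 φ ξ η F ∧ F = F5 ξ η F ∧ fTr e F ξ = 0

/-- The subspace `𝔽₅ = {F ∈ 𝔽 : F = F₄(F) = -F₅(F), f*(F)(ξ) = 0}`. -/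
def MemF5sub (n : ℕ) {ι : Type*} [Fintype ι] (e : OrthonormalBasis ι ℝ V) (φ : V →ₗ[ℝ] V)
    (ξ : V) (η : V →ₗ[ℝ] ℝ) (F : V → V → V → ℝ) : Prop :=
  InF φ ξ η F ∧ F = F4 φ ξ η F ∧ F = -F5 ξ η F ∧ fTrStar φ e F ξ = 0

/-- The subspace `𝔽₄ = {F ∈ (v𝔽)′ : F = F₄(F) = F₅(F), f(F)(ξ) = 0}`. -/
def MemF4sub' (n : ℕ) {ι : Type*} [Fintype ι] (e : OrthonormalBasis ι ℝ V) (φ : V →ₗ[ℝ] V)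
    (ξ : V) (η : V →ₗ[ℝ] ℝ) (F : V → V → V → ℝ) : Prop :=
  MemVF' φ ξ η F ∧ F = F4 φ ξ η F ∧ F = F5 ξ η F ∧ fTr e F ξ = 0

/-- The subspace `𝔽₅ = {F ∈ (v𝔽)′ : F = F₄(F) = -F₅(F), f*(F)(ξ) = 0}`. -/
def MemF5sub' (n : ℕ) {ι : Type*} [Fintype ι] (e : OrthonormalBasis ι ℝ V) (φ : V →ₗ[ℝ] V)
    (ξ : V) (η : V →ₗ[ℝ] ℝ) (F : V → V → V → ℝ) : Prop :=
  MemVF' φ ξ η F ∧ F = F4 φ ξ η F ∧ F = -F5 ξ η F ∧ fTrStar φ e F ξ = 0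

/-- The subspace `𝔽₉ = {F ∈ 𝔽 : F = hF = F₉(F)}`. -/
def MemF9sub (n : ℕ) {ι : Type*} [Fintype ι] (e : OrthonormalBasis ι ℝ V) (φ : V →ₗ[ℝ] V)
    (ξ : V) (η : V →ₗ[ℝ] ℝ) (F : V → V → V → ℝ) : Prop :=
  InF φ ξ η F ∧ F = hF φ F ∧ F = F9 n φ e F

/-- The subspace `𝔽₁₀ = {F ∈ 𝔽 : F = hF = F₁₀(F) - F₉(F)}`. -/
def MemF10sub (n : ℕ) {ι : Type*} [Fintype ι] (e : OrthonormalBasis ι ℝ V) (φ : V →ₗ[ℝ] V)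
    (ξ : V) (η : V →ₗ[ℝ] ℝ) (F : V → V → V → ℝ) : Prop :=
  InF φ ξ η F ∧ F = hF φ F ∧ F = F10 φ F - F9 n φ e F

/-- The subspace `𝔽₁₁ = {F ∈ 𝔽 : F = hF = F₁₁(F)}`. -/
def MemF11sub (φ : V →ₗ[ℝ] V) (ξ : V) (η : V →ₗ[ℝ] ℝ) (F : V → V → V → ℝ) : Prop :=
  InF φ ξ η F ∧ F = hF φ F ∧ F = F11 φ F

/-- The subspace `𝔽₁₂ = {F ∈ 𝔽 : F = hF = F₁₂(F) - F₁₁(F)}`. -/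
def MemF12sub (φ : V →ₗ[ℝ] V) (ξ : V) (η : V →ₗ[ℝ] ℝ) (F : V → V → V → ℝ) : Prop :=
  InF φ ξ η F ∧ F = hF φ F ∧ F = F12 φ F - F11 φ F

/-!
`F₇(F)` depends on `F` only through the trace `f(F)(ξ)`, and `f(F₇(F))(ξ) = f(F)(ξ)` because
`Σᵢ (η(ξ)⟨eᵢ, eᵢ⟩ - η(eᵢ)⟨eᵢ, ξ⟩) = (2n + 1) - 1`; so `F₇` is idempotent and `L₆ = id - 2F₇` is
an involution. Contracting against `F₇(F)` gives `⟨F₇(F), G⟩ = n⁻¹ f(F)(ξ) f(G)(ξ)` for every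
`G ∈ 𝔽`, so `F₇` is self-adjoint: `L₆` is an isometry and `𝔽₂ ⟂ 𝔽₄`. On `(v𝔽)′`, expanding
`0 = F(hx, hy, hz)` with `h = id - η ⊗ ξ` gives `F = F₂(F)`; on `𝒬𝒮𝔽` moreover `F(·, ξ, ·)` is
symmetric (from `F = F₅(F)`) and `φ`-invariant (from `F = F₄(F)`), whence `F = F₆(F)`, and the
stated `𝔽₄`-component is `F - F₇(F)`.
-/

namespace ACM

variable {n : ℕ} {φ : V →ₗ[ℝ] V} {ξ : V} {η : V →ₗ[ℝ] ℝ}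

lemma eta_xi (h : ACM n φ ξ η) : η ξ = 1 := by
  obtain ⟨-, hφφ, hφξ, -, hξξ, -⟩ := h
  have h := congrArg (⟪·, ξ⟫) (hφφ ξ)
  simp only [hφξ, map_zero, inner_zero_left, inner_add_left, inner_neg_left,
    real_inner_smul_left, hξξ] at h
  linarith

lemma eta_eq_inner (h : ACM n φ ξ η) (x : V) : η x = ⟪x, ξ⟫ := by
  have hηξ := h.eta_xi
  obtain ⟨-, -, hφξ, -, -, hg⟩ := h
  have hxξ := hg x ξ
  rw [hφξ, inner_zero_right, hηξ] at hxξ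
  linarith

lemma hMap_eq (h : ACM n φ ξ η) (x : V) : hMap φ x = x - η x • ξ := by
  obtain ⟨-, hφφ, -⟩ := h
  rw [hMap, hφφ]
  abel

lemma eta_hMap (h : ACM n φ ξ η) (x : V) : η (hMap φ x) = 0 := by
  simp [h.hMap_eq, h.eta_xi]

end ACM

lemma isLinearMap_sub_smul {f g : V → ℝ} (hf : IsLinearMap ℝ f) (hg : IsLinearMap ℝ g) (c : ℝ) :
    IsLinearMap ℝ (f - c • g) :=
  (hf.mk' f - c • hg.mk' g).isLinear

lemma Trilinear.sub_smul {F G : V → V → V → ℝ} (hF : Trilinear F) (hG : Trilinear G) (c : ℝ) :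
    Trilinear (F - c • G) :=
  ⟨fun y z => isLinearMap_sub_smul (hF.1 y z) (hG.1 y z) c,
    fun x z => isLinearMap_sub_smul (hF.2.1 x z) (hG.2.1 x z) c,
    fun x y => isLinearMap_sub_smul (hF.2.2 x y) (hG.2.2 x y) c⟩

lemma InF.sub_smul {φ : V →ₗ[ℝ] V} {ξ : V} {η : V →ₗ[ℝ] ℝ} {F G : V → V → V → ℝ}
    (hF : InF φ ξ η F) (hG : InF φ ξ η G) (c : ℝ) : InF φ ξ η (F - c • G) := by
  refine ⟨hF.1.sub_smul hG.1 c, fun x y z => ?_, fun x y z => ?_⟩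
  · simp only [Pi.sub_apply, Pi.smul_apply, smul_eq_mul, hF.2.1 x y z, hG.2.1 x y z]
    ring
  · simp only [Pi.sub_apply, Pi.smul_apply, smul_eq_mul]
    rw [hF.2.2 x y z, hG.2.2 x y z]
    ring

lemma MemQS.sub_smul {φ : V →ₗ[ℝ] V} {ξ : V} {η : V →ₗ[ℝ] ℝ} {F G : V → V → V → ℝ}
    (hF : MemQS φ ξ η F) (hG : MemQS φ ξ η G) (c : ℝ) : MemQS φ ξ η (F - c • G) := by
  obtain ⟨⟨hFF, hFh, hFξ⟩, hF4, hF5⟩ := hF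
  obtain ⟨⟨hGF, hGh, hGξ⟩, hG4, hG5⟩ := hG
  refine ⟨⟨hFF.sub_smul hGF c, ?_, fun y z => ?_⟩, ?_, ?_⟩
  · change hF φ F - c • hF φ G = 0
    simp [hFh, hGh]
  · simp [hFξ, hGξ]
  · conv_lhs => rw [hF4, hG4]
    funext x y z
    simp only [F4, Pi.sub_apply, Pi.smul_apply, smul_eq_mul]
    ring
  · conv_lhs => rw [hF5, hG5]
    funext x y z
    simp only [F5, Pi.sub_apply, Pi.smul_apply, smul_eq_mul]
    ring

section Trace

variable {ι : Type*} [Fintype ι]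

lemma OrthonormalBasis.sum_inner_mul_apply (e : OrthonormalBasis ι ℝ V) {L : V → ℝ}
    (hL : IsLinearMap ℝ L) (v : V) : ∑ i, ⟪e i, v⟫ * L (e i) = L v := by
  conv_rhs => rw [← e.sum_repr' v]
  change _ = hL.mk' L (∑ i, ⟪e i, v⟫ • e i)
  simp [map_sum]

lemma OrthonormalBasis.sum_apply_self_eq (e f : OrthonormalBasis ι ℝ V) {B : V → V → ℝ}
    (hB₁ : ∀ y, IsLinearMap ℝ fun x => B x y) (hB₂ : ∀ x, IsLinearMap ℝ (B x)) :
    ∑ i, B (f i) (f i) = ∑ i, B (e i) (e i) := calc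
  ∑ i, B (f i) (f i) = ∑ i, ∑ j, ⟪e j, f i⟫ * B (f i) (e j) := by
    simp only [e.sum_inner_mul_apply (hB₂ _)]
  _ = ∑ j, ∑ i, ⟪f i, e j⟫ * B (f i) (e j) := by
    rw [Finset.sum_comm]
    exact Finset.sum_congr rfl fun j _ => Finset.sum_congr rfl fun i _ => by rw [real_inner_comm]
  _ = ∑ j, B (e j) (e j) := by
    simp only [f.sum_inner_mul_apply (hB₁ _)]

variable (e : OrthonormalBasis ι ℝ V)

lemma fTr_sub_smul (F G : V → V → V → ℝ) (c : ℝ) (z : V) :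
    fTr e (F - c • G) z = fTr e F z - c * fTr e G z := by
  simp [fTr, Finset.sum_sub_distrib, Finset.mul_sum]

lemma fTr_smul_add (a : ℝ) (F G : V → V → V → ℝ) (z : V) :
    fTr e (a • F + G) z = a * fTr e F z + fTr e G z := by
  simp [fTr, Finset.sum_add_distrib, Finset.mul_sum]

end Trace

section F7

variable {n : ℕ} {φ : V →ₗ[ℝ] V} {ξ : V} {η : V →ₗ[ℝ] ℝ} {ι : Type*} [Fintype ι]
  (e : OrthonormalBasis ι ℝ V)

lemma F7_eq_of_fTr_eq {F G : V → V → V → ℝ} (h : fTr e F ξ = fTr e G ξ) :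
    F7 n e ξ η F = F7 n e ξ η G := by
  unfold F7
  rw [h]

lemma F7_sub_smul (F G : V → V → V → ℝ) (c : ℝ) :
    F7 n e ξ η (F - c • G) = F7 n e ξ η F - c • F7 n e ξ η G := by
  funext x y z
  simp only [F7, fTr_sub_smul, Pi.sub_apply, Pi.smul_apply, smul_eq_mul]
  ring

lemma fTr_F7 (h : ACM n φ ξ η) (hn : n ≠ 0) (F : V → V → V → ℝ) :
    fTr e (F7 n e ξ η F) ξ = fTr e F ξ := by
  have hη := h.eta_eq_inner
  have hηξ := h.eta_xi
  obtain ⟨hdim, -, -, -, hξξ, -⟩ := h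
  have hcard : (Fintype.card ι : ℝ) = 2 * n + 1 := by
    rw [← Module.finrank_eq_card_basis e.toBasis, hdim]
    push_cast
    ring
  have hξ : ∑ i, η (e i) * ⟪e i, ξ⟫ = 1 := by
    rw [← hξξ, ← e.sum_inner_mul_inner ξ ξ]
    simp only [hη, real_inner_comm]
  have hnR : (n : ℝ) ≠ 0 := Nat.cast_ne_zero.mpr hn
  simp only [fTr, F7, hηξ, one_mul, ← Finset.mul_sum, Finset.sum_sub_distrib,
    real_inner_self_eq_norm_sq, e.orthonormal.1, hξ, Finset.sum_const, Finset.card_univ,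
    nsmul_eq_mul, hcard]
  field_simp
  ring

lemma F7_F7 (h : ACM n φ ξ η) (hn : n ≠ 0) (F : V → V → V → ℝ) :
    F7 n e ξ η (F7 n e ξ η F) = F7 n e ξ η F :=
  F7_eq_of_fTr_eq e (fTr_F7 e h hn F)

lemma trilinear_F7 (F : V → V → V → ℝ) : Trilinear (F7 n e ξ η F) := by
  refine ⟨fun y z => ⟨?_, ?_⟩, fun x z => ⟨?_, ?_⟩, fun x y => ⟨?_, ?_⟩⟩ <;> intros <;>
    simp only [F7, inner_add_left, inner_add_right, real_inner_smul_left, real_inner_smul_right,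
      map_add, map_smul, smul_eq_mul] <;>
    ring

lemma memQS_F7 (h : ACM n φ ξ η) (F : V → V → V → ℝ) : MemQS φ ξ η (F7 n e ξ η F) := by
  have hξ : ∀ x, ⟪x, ξ⟫ = η x := fun x => (h.eta_eq_inner x).symm
  have hξ' : ∀ x, ⟪ξ, x⟫ = η x := fun x => by rw [real_inner_comm, hξ]
  have hηξ := h.eta_xi
  have hηh := h.eta_hMap
  obtain ⟨-, -, -, hηφ, -, hg⟩ := h
  refine ⟨⟨⟨trilinear_F7 e F, fun x y z => ?_, fun x y z => ?_⟩, ?_, fun y z => ?_⟩, ?_, ?_⟩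
  · simp only [F7]
    ring
  · simp only [F7, hηφ, hηξ, hξ]
    ring
  · funext x y z
    simp [hF, F7, hηh]
  · simp only [F7, hξ']
    ring
  · funext x y z
    simp only [F4, F7, hηφ, hηξ, hξ, hg]
    ring
  · funext x y z
    simp only [F5, F7, hηξ, hξ, real_inner_comm x y, real_inner_comm x z]
    ring

lemma innerF_F7 (h : ACM n φ ξ η) (F : V → V → V → ℝ) {H : V → V → V → ℝ} (hH : Trilinear H)
    (hH' : ∀ x y z, H x y z = -H x z y) :
    innerF e (F7 n e ξ η F) H = (n : ℝ)⁻¹ * fTr e F ξ * fTr e H ξ := by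
  classical
  have h₁ : ∀ i, ∑ k, ⟪e k, ξ⟫ * H (e i) (e i) (e k) = H (e i) (e i) ξ := fun i =>
    e.sum_inner_mul_apply (hH.2.2 _ _) ξ
  have h₂ : ∀ i, ∑ j, ⟪e j, ξ⟫ * H (e i) (e j) (e i) = -H (e i) (e i) ξ := fun i => by
    rw [e.sum_inner_mul_apply (hH.2.1 _ _) ξ, hH']
  simp only [innerF, F7, orthonormal_iff_ite.mp e.orthonormal, mul_ite, mul_one, mul_zero,
    sub_mul, ite_mul, zero_mul, mul_sub, Finset.sum_sub_distrib, Finset.sum_ite_irrel,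
    Finset.sum_const_zero, Finset.sum_ite_eq, Finset.mem_univ, if_true, h.eta_eq_inner, mul_assoc,
    ← Finset.mul_sum, h₁, h₂, Finset.sum_neg_distrib, fTr]
  ring

end F7

section L6

variable {n : ℕ} {φ : V →ₗ[ℝ] V} {ξ : V} {η : V →ₗ[ℝ] ℝ} {ι : Type*} [Fintype ι]
  (e : OrthonormalBasis ι ℝ V)

lemma L6_eq_sub_smul (F : V → V → V → ℝ) : L6 n e ξ η F = F - (2 : ℝ) • F7 n e ξ η F := rfl

lemma L6_smul_add (a : ℝ) (F G : V → V → V → ℝ) :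
    L6 n e ξ η (a • F + G) = a • L6 n e ξ η F + L6 n e ξ η G := by
  funext x y z
  simp only [L6, F7, fTr_smul_add, Pi.add_apply, Pi.smul_apply, smul_eq_mul]
  ring

lemma L6_L6 (h : ACM n φ ξ η) (hn : n ≠ 0) (F : V → V → V → ℝ) :
    L6 n e ξ η (L6 n e ξ η F) = F := by
  rw [L6_eq_sub_smul, L6_eq_sub_smul, F7_sub_smul, F7_F7 e h hn]
  module

lemma innerF_L6_L6 (h : ACM n φ ξ η) (hn : n ≠ 0) {F G : V → V → V → ℝ}
    (hF : InF φ ξ η F) (hG : InF φ ξ η G) :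
    innerF e (L6 n e ξ η F) (L6 n e ξ η G) = innerF e F G := by
  have hexpand : innerF e (L6 n e ξ η F) (L6 n e ξ η G) = innerF e F G
      - 2 * innerF e (F7 n e ξ η F) G - 2 * innerF e (F7 n e ξ η G) F
      + 4 * innerF e (F7 n e ξ η F) (F7 n e ξ η G) := by
    simp only [innerF, L6, Finset.mul_sum, ← Finset.sum_sub_distrib, ← Finset.sum_add_distrib]
    refine Finset.sum_congr rfl fun i _ => Finset.sum_congr rfl fun j _ =>
      Finset.sum_congr rfl fun k _ => by ring
  have hF7G := (memQS_F7 e h G).1.1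
  rw [hexpand, innerF_F7 e h F hG.1 hG.2.1, innerF_F7 e h G hF.1 hF.2.1,
    innerF_F7 e h F hF7G.1 hF7G.2.1, fTr_F7 e h hn]
  ring

lemma L6_actA (h : ACM n φ ξ η) {A : V ≃ₗᵢ[ℝ] V} (hA : A ξ = ξ) {F : V → V → V → ℝ}
    (hF : Trilinear F) : L6 n e ξ η (actA A F) = actA A (L6 n e ξ η F) := by
  have hA' : A.symm ξ = ξ := A.symm_apply_eq.mpr hA.symm
  have hη : ∀ x, η (A.symm x) = η x := fun x => by
    rw [h.eta_eq_inner, h.eta_eq_inner, ← A.symm.inner_map_map x ξ, hA']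
  have htr : fTr e (actA A F) ξ = fTr e F ξ := by
    simpa [fTr, actA, hA'] using
      e.sum_apply_self_eq (e.map A.symm) (fun y => hF.1 y ξ) (fun x => hF.2.1 x ξ)
  funext x y z
  simp only [L6, F7, actA, htr, hη, LinearIsometryEquiv.inner_map_map]

lemma L6_eq_neg_iff (F : V → V → V → ℝ) : L6 n e ξ η F = -F ↔ F = F7 n e ξ η F := by
  have hdiff : F - (2 : ℝ) • F7 n e ξ η F - -F = (2 : ℝ) • (F - F7 n e ξ η F) := by module
  rw [L6_eq_sub_smul, ← sub_eq_zero, hdiff, smul_eq_zero, sub_eq_zero]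
  simp

lemma L6_eq_self_iff (h : ACM n φ ξ η) (hn : n ≠ 0) (F : V → V → V → ℝ) :
    L6 n e ξ η F = F ↔ fTr e F ξ = 0 := by
  rw [L6_eq_sub_smul, sub_eq_self, smul_eq_zero]
  simp only [OfNat.ofNat_ne_zero, false_or]
  refine ⟨fun h7 => ?_, fun htr => ?_⟩
  · simpa [h7, fTr] using (fTr_F7 e h hn F).symm
  · funext x y z
    simp [F7, htr]

end L6

section Decomposition

variable {n : ℕ} {φ : V →ₗ[ℝ] V} {ξ : V} {η : V →ₗ[ℝ] ℝ} {F : V → V → V → ℝ}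

lemma MemVF'.F2_eq (h : ACM n φ ξ η) (hF : MemVF' φ ξ η F) : F2 ξ η F = F := by
  obtain ⟨⟨hT, hA, -⟩, hh, hξ⟩ := hF
  funext x y z
  have h0 : F (hMap φ x) (hMap φ y) (hMap φ z) = 0 := congrFun (congrFun (congrFun hh x) y) z
  have hξξ : F x ξ ξ = 0 := by linarith [hA x ξ ξ]
  simp only [h.hMap_eq] at h0
  rw [(hT.1 _ _).map_sub, (hT.1 _ _).map_smul, hξ, smul_zero, sub_zero,
    (hT.2.1 _ _).map_sub, (hT.2.1 _ _).map_smul, (hT.2.2 _ _).map_sub, (hT.2.2 _ _).map_smul,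
    (hT.2.2 _ _).map_sub, (hT.2.2 _ _).map_smul, hξξ, hA x y ξ, smul_zero, smul_eq_mul,
    smul_eq_mul] at h0
  simp only [F2]
  linarith

lemma MemQS.F6_eq (h : ACM n φ ξ η) (hF : MemQS φ ξ η F) : F6 φ ξ η F = F := by
  have hF2 := hF.1.F2_eq h
  have hηξ := h.eta_xi
  obtain ⟨-, -, hφξ, -⟩ := h
  obtain ⟨hF', hF4, hF5⟩ := hF
  have hsymm : ∀ x z, F x ξ z = F z ξ x := fun x z => by
    simpa [F5, hηξ, hF'.2.2] using congrFun (congrFun (congrFun hF5 x) ξ) z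
  have hφ : ∀ x z, F (φ x) ξ (φ z) = F x ξ z := fun x z => by
    have h0 : F (φ x) ξ (φ ξ) = 0 := by rw [hφξ]; exact (hF'.1.1.2.2 _ _).map_zero
    simpa [F4, hηξ, h0] using (congrFun (congrFun (congrFun hF4 x) ξ) z).symm
  conv_rhs => rw [← hF2]
  funext x y z
  simp only [F6, F2, hsymm (φ z), hsymm (φ y), hφ]

lemma MemQS.quarter_sum_eq (h : ACM n φ ξ η) {ι : Type*} [Fintype ι]
    (e : OrthonormalBasis ι ℝ V) (hF : MemQS φ ξ η F) :
    (fun x y z => (1 / 4) * (F2 ξ η F x y z + F4 φ ξ η F x y z + F5 ξ η F x y z +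
      F6 φ ξ η F x y z - 4 * F7 n e ξ η F x y z)) = F - F7 n e ξ η F := by
  rw [hF.1.F2_eq h, hF.F6_eq h, ← hF.2.1, ← hF.2.2]
  funext x y z
  simp only [Pi.sub_apply]
  ring

variable {ι : Type*} [Fintype ι] (e : OrthonormalBasis ι ℝ V)

lemma memF2sub_F7 (h : ACM n φ ξ η) (hn : n ≠ 0) (F : V → V → V → ℝ) :
    MemF2sub n e φ ξ η (F7 n e ξ η F) :=
  ⟨(memQS_F7 e h F).1.1, (F7_F7 e h hn F).symm⟩

lemma MemQS.memF4sub_sub_F7 (h : ACM n φ ξ η) (hn : n ≠ 0) (hF : MemQS φ ξ η F) :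
    MemF4sub n e φ ξ η (F - F7 n e ξ η F) := by
  have hQS : MemQS φ ξ η (F - F7 n e ξ η F) := by
    simpa using hF.sub_smul (memQS_F7 e h F) 1
  refine ⟨hQS.1.1, hQS.2.1, hQS.2.2, ?_⟩
  simpa [fTr_F7 e h hn] using fTr_sub_smul e F (F7 n e ξ η F) 1 ξ

lemma eq_F7_add_of_memF2sub_of_memF4sub {F G : V → V → V → ℝ} (hF : MemF2sub n e φ ξ η F)
    (hG : MemF4sub n e φ ξ η G) : F = F7 n e ξ η (F + G) := by
  have htr : fTr e (F + G) ξ = fTr e F ξ := by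
    simpa [hG.2.2.2] using fTr_smul_add e 1 F G ξ
  rw [F7_eq_of_fTr_eq e htr]
  exact hF.2

lemma MemQS.existsUnique_F2_F4 (h : ACM n φ ξ η) (hn : n ≠ 0) (hF : MemQS φ ξ η F) :
    ∃! p : (V → V → V → ℝ) × (V → V → V → ℝ),
      MemF2sub n e φ ξ η p.1 ∧ MemF4sub n e φ ξ η p.2 ∧ F = p.1 + p.2 := by
  refine ⟨(F7 n e ξ η F, F - F7 n e ξ η F),
    ⟨memF2sub_F7 e h hn F, hF.memF4sub_sub_F7 e h hn, (add_sub_cancel _ _).symm⟩, ?_⟩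
  rintro ⟨p₁, p₂⟩ ⟨hp₁, hp₂, rfl⟩
  have h₁ := eq_F7_add_of_memF2sub_of_memF4sub e hp₁ hp₂
  exact Prod.ext h₁ (by rw [← h₁]; exact (add_sub_cancel_left p₁ p₂).symm)

lemma innerF_eq_zero_of_memF2sub_of_memF4sub (h : ACM n φ ξ η) {G : V → V → V → ℝ}
    (hF : MemF2sub n e φ ξ η F) (hG : MemF4sub n e φ ξ η G) : innerF e F G = 0 := by
  rw [hF.2, innerF_F7 e h F hG.1.1 hG.1.2.1, hG.2.2.2, mul_zero]

end Decomposition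

theorem stmt14 (n : ℕ) (φ : V →ₗ[ℝ] V) (ξ : V) (η : V →ₗ[ℝ] ℝ)
    (hacm : ACM n φ ξ η) (hn : 1 ≤ n) (e : OrthonormalBasis (Fin (2 * n + 1)) ℝ V) :
    (∀ F, MemQS φ ξ η F → MemQS φ ξ η (L6 n e ξ η F)) ∧
    (∀ (a : ℝ) (F G : V → V → V → ℝ),
      L6 n e ξ η (fun x y z => a * F x y z + G x y z) =
        fun x y z => a * L6 n e ξ η F x y z + L6 n e ξ η G x y z) ∧
    (∀ F, MemQS φ ξ η F → L6 n e ξ η (L6 n e ξ η F) = F) ∧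
    (∀ F G, MemQS φ ξ η F → MemQS φ ξ η G →
      innerF e (L6 n e ξ η F) (L6 n e ξ η G) = innerF e F G) ∧
    (∀ A : V ≃ₗᵢ[ℝ] V, (∀ x, A (φ x) = φ (A x)) → A ξ = ξ →
      ∀ F, MemQS φ ξ η F → L6 n e ξ η (actA A F) = actA A (L6 n e ξ η F)) ∧
    (∀ F, MemQS φ ξ η F →
      (L6 n e ξ η F = -F ↔ MemF2sub n e φ ξ η F) ∧
      (L6 n e ξ η F = F ↔ MemF4sub n e φ ξ η F)) ∧
    (∀ F, MemQS φ ξ η F →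
      MemF2sub n e φ ξ η (F7 n e ξ η F) ∧
      MemF4sub n e φ ξ η (fun x y z => (1 / 4) * (F2 ξ η F x y z +
        F4 φ ξ η F x y z + F5 ξ η F x y z + F6 φ ξ η F x y z -
        4 * F7 n e ξ η F x y z)) ∧
      ∀ x y z, F x y z = F7 n e ξ η F x y z +
        (1 / 4) * (F2 ξ η F x y z + F4 φ ξ η F x y z + F5 ξ η F x y z +
          F6 φ ξ η F x y z - 4 * F7 n e ξ η F x y z)) ∧
    (∀ F, MemQS φ ξ η F →
      ∃! p : (V → V → V → ℝ) × (V → V → V → ℝ),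
        MemF2sub n e φ ξ η p.1 ∧ MemF4sub n e φ ξ η p.2 ∧ F = p.1 + p.2) ∧
    (∀ F G, MemF2sub n e φ ξ η F → MemF4sub n e φ ξ η G → innerF e F G = 0) := by
  have hn₀ : n ≠ 0 := Nat.one_le_iff_ne_zero.mp hn
  refine ⟨fun F hF => hF.sub_smul (memQS_F7 e hacm F) 2, fun a F G => L6_smul_add e a F G,
    fun F _ => L6_L6 e hacm hn₀ F, fun F G hF hG => innerF_L6_L6 e hacm hn₀ hF.1.1 hG.1.1,
    fun A _ hA F hF => L6_actA e hacm hA hF.1.1.1, fun F hF => ⟨?_, ?_⟩, fun F hF => ?_,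
    fun F hF => hF.existsUnique_F2_F4 e hacm hn₀,
    fun F G hF hG => innerF_eq_zero_of_memF2sub_of_memF4sub e hacm hF hG⟩
  · rw [L6_eq_neg_iff]
    exact ⟨fun h7 => ⟨hF.1.1, h7⟩, And.right⟩
  · rw [L6_eq_self_iff e hacm hn₀]
    exact ⟨fun htr => ⟨hF.1.1, hF.2.1, hF.2.2, htr⟩, fun h4 => h4.2.2.2⟩
  · have hq := hF.quarter_sum_eq hacm e
    refine ⟨memF2sub_F7 e hacm hn₀ F, hq ▸ hF.memF4sub_sub_F7 e hacm hn₀, fun x y z => ?_⟩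
    have hqxyz := congrFun (congrFun (congrFun hq x) y) z
    simp only [Pi.sub_apply] at hqxyz
    rw [hqxyz]
    ring
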